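/- Let H be a Hopf algebra over a field k with antipode S, and let A be a right coideal subalgebra of H (a subalgebra with Δ(A) ⊆ A ⊗ H). Then S(A) is a left coideal subalgebra of H and A⁺H = S(A)⁺H, where A⁺ = A ∩ ker ε. -/

import Mathlib

open TensorProduct LinearMap Coalgebra HopfAlgebra

namespace HopfAux

variable {k H : Type*} [CommSemiring k] [Semiring H] [HopfAlgebra k H]

lemma repr_sum_smul_right {a : H} {ι : Type*} (r : Coalgebra.Repr k a ι) :
    ∑ i ∈ r.index, counit (R := k) (r.left i) • r.right i = a := by
  have h := congrArg (TensorProduct.lid k H) (Coalgebra.sum_counit_tmul_eq r)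
  rw [map_sum] at h
  simp only [lid_tmul] at h
  simpa using h

lemma repr_sum_smul_left {a : H} {ι : Type*} (r : Coalgebra.Repr k a ι) :
    ∑ i ∈ r.index, counit (R := k) (r.right i) • r.left i = a := by
  have h := congrArg (TensorProduct.rid k H) (Coalgebra.sum_tmul_counit_eq r)
  rw [map_sum] at h
  simp only [rid_tmul] at h
  simpa using h

lemma antipode_one' : antipode (R := k) (1 : H) = 1 := by
  have h := mul_antipode_rTensor_comul_apply (R := k) (a := (1 : H))
  rw [Bialgebra.comul_one, Algebra.TensorProduct.one_def] at h
  simpa using h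

lemma counit_antipode' (a : H) :
    counit (R := k) (antipode (R := k) a) = counit (R := k) a := by
  let r := ℛ k a
  have h1 := congrArg (counit (R := k)) (sum_antipode_mul_eq_algebraMap_counit (R := k) r)
  rw [map_sum, Bialgebra.counit_algebraMap] at h1
  calc counit (R := k) (antipode (R := k) a)
      = counit (R := k) (antipode (R := k)
          (∑ i ∈ r.index, counit (R := k) (r.right i) • r.left i)) := by
        rw [repr_sum_smul_left r]
    _ = ∑ i ∈ r.index, counit (R := k) (antipode (R := k) (r.left i) * r.right i) := by
        simp [map_sum, map_smul, smul_eq_mul, mul_comm]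
    _ = counit (R := k) a := h1


section Conv

variable (k H) in
/-- Convolution product on `Hom(H, B)`. -/
noncomputable def hconv {B : Type*} [Semiring B] [Algebra k B] (f g : H →ₗ[k] B) : H →ₗ[k] B :=
  LinearMap.mul' k B ∘ₗ TensorProduct.map f g ∘ₗ (Coalgebra.comul : H →ₗ[k] H ⊗[k] H)

variable (k H) in
/-- Convolution unit on `Hom(H, B)`. -/
noncomputable def hunit {B : Type*} [Semiring B] [Algebra k B] : H →ₗ[k] B :=
  Algebra.linearMap k B ∘ₗ (Coalgebra.counit : H →ₗ[k] k)

variable {B : Type*} [Semiring B] [Algebra k B]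

lemma hunit_apply (a : H) : hunit k H (B := B) a = algebraMap k B (counit (R := k) a) := rfl

lemma hconv_apply (f g : H →ₗ[k] B) {a : H} {ι : Type*} (r : Coalgebra.Repr k a ι) :
    hconv k H f g a = ∑ i ∈ r.index, f (r.left i) * g (r.right i) := by
  simp only [hconv, comp_apply]
  rw [← r.eq, map_sum]
  simp [LinearMap.mul'_apply]

lemma hconv_hunit_right (f : H →ₗ[k] B) : hconv k H f (hunit k H) = f := by
  ext a
  rw [hconv_apply f _ (ℛ k a)]
  have : ∀ i ∈ (ℛ k a).index,
      f ((ℛ k a).left i) * hunit k H (B := B) ((ℛ k a).right i)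
        = counit (R := k) ((ℛ k a).right i) • f ((ℛ k a).left i) := by
    intro i _
    rw [hunit_apply, Algebra.algebraMap_eq_smul_one, mul_smul_comm, mul_one]
  rw [Finset.sum_congr rfl this]
  simp only [← map_smul, ← map_sum, repr_sum_smul_left]

lemma hconv_hunit_left (f : H →ₗ[k] B) : hconv k H (hunit k H) f = f := by
  ext a
  rw [hconv_apply _ f (ℛ k a)]
  have : ∀ i ∈ (ℛ k a).index,
      hunit k H (B := B) ((ℛ k a).left i) * f ((ℛ k a).right i)
        = counit (R := k) ((ℛ k a).left i) • f ((ℛ k a).right i) := by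
    intro i _
    rw [hunit_apply, Algebra.algebraMap_eq_smul_one, smul_mul_assoc, one_mul]
  rw [Finset.sum_congr rfl this]
  simp only [← map_smul, ← map_sum, repr_sum_smul_right]

lemma hconv_assoc (f g h : H →ₗ[k] B) :
    hconv k H (hconv k H f g) h = hconv k H f (hconv k H g h) := by
  ext a
  set r := ℛ k a with hr
  have key := Coalgebra.sum_map_tmul_tmul_eq (R := k) (f := f) (g := g) (h := h) (a := a)
    (repr := r) (a₁ := fun i => ℛ k (r.left i)) (a₂ := fun i => ℛ k (r.right i))
  have key2 := congrArg (fun t => (LinearMap.mul' k B) ((LinearMap.mul' k B).lTensor B t)) key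
  simp only [map_sum, lTensor_tmul, mul'_apply] at key2
  calc hconv k H (hconv k H f g) h a
      = ∑ i ∈ r.index, (hconv k H f g) (r.left i) * h (r.right i) := hconv_apply _ _ r
    _ = ∑ i ∈ r.index, (∑ j ∈ (ℛ k (r.left i)).index,
          f ((ℛ k (r.left i)).left j) * g ((ℛ k (r.left i)).right j)) * h (r.right i) := by
        refine Finset.sum_congr rfl fun i _ => ?_
        rw [hconv_apply f g (ℛ k (r.left i))]
    _ = ∑ i ∈ r.index, ∑ j ∈ (ℛ k (r.left i)).index,
          f ((ℛ k (r.left i)).left j) * (g ((ℛ k (r.left i)).right j) * h (r.right i)) := by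
        simp [Finset.sum_mul, mul_assoc]
    _ = ∑ i ∈ r.index, ∑ j ∈ (ℛ k (r.right i)).index,
          f (r.left i) * (g ((ℛ k (r.right i)).left j) * h ((ℛ k (r.right i)).right j)) :=
        key2.symm
    _ = ∑ i ∈ r.index, f (r.left i) * (hconv k H g h) (r.right i) := by
        refine Finset.sum_congr rfl fun i _ => ?_
        rw [hconv_apply g h (ℛ k (r.right i)), Finset.mul_sum]
    _ = hconv k H f (hconv k H g h) a := (hconv_apply _ _ r).symm

lemma hconv_inv_unique {f g h : H →ₗ[k] B} (h1 : hconv k H f g = hunit k H)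
    (h2 : hconv k H h f = hunit k H) : h = g := by
  calc h = hconv k H h (hunit k H) := (hconv_hunit_right h).symm
    _ = hconv k H h (hconv k H f g) := by rw [h1]
    _ = hconv k H (hconv k H h f) g := (hconv_assoc h f g).symm
    _ = hconv k H (hunit k H) g := by rw [h2]
    _ = g := hconv_hunit_left g

end Conv


variable (k H) in
noncomputable def Gmap : H →ₗ[k] H ⊗[k] H :=
  TensorProduct.map (antipode (R := k)) (antipode (R := k)) ∘ₗ
    (TensorProduct.comm k H H).toLinearMap ∘ₗ (Coalgebra.comul : H →ₗ[k] H ⊗[k] H)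

lemma Gmap_apply {a : H} {ι : Type*} (r : Coalgebra.Repr k a ι) :
    Gmap k H a = ∑ i ∈ r.index,
      antipode (R := k) (r.right i) ⊗ₜ[k] antipode (R := k) (r.left i) := by
  simp only [Gmap, comp_apply, LinearEquiv.coe_coe]
  rw [← r.eq, map_sum, map_sum]
  simp

variable (k H) in
noncomputable def Xi1 : H ⊗[k] (H ⊗[k] H) →ₗ[k] H ⊗[k] H :=
  LinearMap.mul' k (H ⊗[k] H) ∘ₗ ((Gmap k H).lTensor (H ⊗[k] H)) ∘ₗ
    (TensorProduct.assoc k H H H).symm.toLinearMap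

lemma Xi1_tmul (x y z : H) :
    Xi1 k H (x ⊗ₜ (y ⊗ₜ z)) = (x ⊗ₜ y) * Gmap k H z := by
  simp [Xi1, mul'_apply]

variable (k H) in
noncomputable def Xi2 : H ⊗[k] (H ⊗[k] (H ⊗[k] H)) →ₗ[k] H ⊗[k] H :=
  LinearMap.mul' k (H ⊗[k] H) ∘ₗ
    ((TensorProduct.map (antipode (R := k)) (antipode (R := k)) ∘ₗ
      (TensorProduct.comm k H H).toLinearMap).lTensor (H ⊗[k] H)) ∘ₗ
    (TensorProduct.assoc k H H (H ⊗[k] H)).symm.toLinearMap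

lemma Xi2_tmul (x y z w : H) :
    Xi2 k H (x ⊗ₜ (y ⊗ₜ (z ⊗ₜ w)))
      = (x * antipode (R := k) w) ⊗ₜ (y * antipode (R := k) z) := by
  simp [Xi2, mul'_apply, Algebra.TensorProduct.tmul_mul_tmul]


lemma hconv_comul_Gmap :
    hconv k H Coalgebra.comul (Gmap k H)
      = hunit k H := by
  ext a
  set r := ℛ k a with hrdef
  have key := Coalgebra.sum_tmul_tmul_eq (R := k) r
    (fun i => ℛ k (r.left i)) (fun i => ℛ k (r.right i))
  have key1 := congrArg (Xi1 k H) key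
  simp only [map_sum] at key1
  have e1 : hconv k H Coalgebra.comul (Gmap k H) a
      = ∑ i ∈ r.index, ∑ j ∈ (ℛ k (r.left i)).index,
          Xi1 k H ((ℛ k (r.left i)).left j ⊗ₜ ((ℛ k (r.left i)).right j ⊗ₜ r.right i)) := by
    rw [hconv_apply _ _ r]
    refine Finset.sum_congr rfl fun i _ => ?_
    conv_lhs => rw [← (ℛ k (r.left i)).eq]
    rw [Finset.sum_mul]
    exact Finset.sum_congr rfl fun j _ => (Xi1_tmul _ _ _).symm
  rw [e1, key1]
  have e2 : ∀ i ∈ r.index,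
      ∑ j ∈ (ℛ k (r.right i)).index,
        Xi1 k H (r.left i ⊗ₜ ((ℛ k (r.right i)).left j ⊗ₜ (ℛ k (r.right i)).right j))
      = (r.left i * antipode (R := k) (r.right i)) ⊗ₜ[k] (1 : H) := by
    intro i _
    set s := ℛ k (r.right i) with hsdef
    have keyi := Coalgebra.sum_tmul_tmul_eq (R := k) s
      (fun j => ℛ k (s.left j)) (fun j => ℛ k (s.right j))
    have keyi2 := congrArg (fun t => Xi2 k H (r.left i ⊗ₜ[k] t)) keyi
    simp only [tmul_sum, map_sum] at keyi2
    calc ∑ j ∈ s.index, Xi1 k H (r.left i ⊗ₜ (s.left j ⊗ₜ s.right j))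
        = ∑ j ∈ s.index, ∑ q ∈ (ℛ k (s.right j)).index,
            Xi2 k H (r.left i ⊗ₜ (s.left j ⊗ₜ
              ((ℛ k (s.right j)).left q ⊗ₜ (ℛ k (s.right j)).right q))) := by
          refine Finset.sum_congr rfl fun j _ => ?_
          rw [Xi1_tmul, Gmap_apply (ℛ k (s.right j)), Finset.mul_sum]
          refine Finset.sum_congr rfl fun q _ => ?_
          rw [Xi2_tmul, Algebra.TensorProduct.tmul_mul_tmul]
      _ = ∑ j ∈ s.index, ∑ q ∈ (ℛ k (s.left j)).index,
            Xi2 k H (r.left i ⊗ₜ ((ℛ k (s.left j)).left q ⊗ₜ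
              ((ℛ k (s.left j)).right q ⊗ₜ s.right j))) := keyi2.symm
      _ = ∑ j ∈ s.index, ∑ q ∈ (ℛ k (s.left j)).index,
            (r.left i * antipode (R := k) (s.right j)) ⊗ₜ[k]
              ((ℛ k (s.left j)).left q * antipode (R := k) ((ℛ k (s.left j)).right q)) := by
          exact Finset.sum_congr rfl fun j _ => Finset.sum_congr rfl fun q _ => Xi2_tmul _ _ _ _
      _ = ∑ j ∈ s.index, counit (R := k) (s.left j) •
            ((r.left i * antipode (R := k) (s.right j)) ⊗ₜ[k] (1 : H)) := by
          refine Finset.sum_congr rfl fun j _ => ?_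
          rw [← tmul_sum, sum_mul_antipode_eq_smul (ℛ k (s.left j)), tmul_smul]
      _ = (r.left i * antipode (R := k) (r.right i)) ⊗ₜ[k] (1 : H) := by
          have : ∀ j ∈ s.index, counit (R := k) (s.left j) •
              ((r.left i * antipode (R := k) (s.right j)) ⊗ₜ[k] (1 : H))
              = (r.left i * antipode (R := k) (counit (R := k) (s.left j) • s.right j))
                  ⊗ₜ[k] (1 : H) := by
            intro j _
            rw [map_smul, mul_smul_comm, smul_tmul']
          rw [Finset.sum_congr rfl this, ← sum_tmul, ← Finset.mul_sum, ← map_sum,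
            repr_sum_smul_right s]
  rw [Finset.sum_congr rfl e2, ← sum_tmul, sum_mul_antipode_eq_smul r, hunit_apply]
  simp [Algebra.algebraMap_eq_smul_one, Algebra.TensorProduct.one_def, smul_tmul']



lemma hconv_comulantipode_comul :
    hconv k H ((Coalgebra.comul : H →ₗ[k] H ⊗[k] H) ∘ₗ antipode (R := k)) Coalgebra.comul
      = hunit k H := by
  ext a
  rw [hconv_apply _ _ (ℛ k a)]
  have : ∀ i ∈ (ℛ k a).index,
      ((Coalgebra.comul : H →ₗ[k] H ⊗[k] H) ∘ₗ antipode (R := k)) ((ℛ k a).left i) *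
        (Coalgebra.comul : H →ₗ[k] H ⊗[k] H) ((ℛ k a).right i)
      = Coalgebra.comul (antipode (R := k) ((ℛ k a).left i) * (ℛ k a).right i) := by
    intro i _
    rw [comp_apply, Bialgebra.comul_mul]
  rw [Finset.sum_congr rfl this, ← map_sum, sum_antipode_mul_eq_algebraMap_counit (ℛ k a)]
  rw [hunit_apply]
  exact Bialgebra.comul_algebraMap _

lemma comul_antipode_eq :
    (Coalgebra.comul : H →ₗ[k] H ⊗[k] H) ∘ₗ antipode (R := k) = Gmap k H :=
  hconv_inv_unique hconv_comul_Gmap hconv_comulantipode_comul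

lemma comul_antipode_apply (a : H) :
    (Coalgebra.comul (antipode (R := k) a) : H ⊗[k] H) = Gmap k H a :=
  LinearMap.congr_fun (comul_antipode_eq (k := k) (H := H)) a

variable (k H) in
noncomputable def Phi : (H ⊗[k] (H ⊗[k] H)) ⊗[k] (H ⊗[k] (H ⊗[k] H)) →ₗ[k] H :=
  LinearMap.mul' k H ∘ₗ
    (TensorProduct.map (antipode (R := k) ∘ₗ LinearMap.mul' k H)
      (LinearMap.mul' k H ∘ₗ
        (TensorProduct.map (LinearMap.mul' k H)
          (LinearMap.mul' k H ∘ₗ TensorProduct.map (antipode (R := k)) (antipode (R := k)) ∘ₗ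
            (TensorProduct.comm k H H).toLinearMap)) ∘ₗ
        (tensorTensorTensorComm k H H H H).toLinearMap)) ∘ₗ
    (tensorTensorTensorComm k H (H ⊗[k] H) H (H ⊗[k] H)).toLinearMap

lemma Phi_tmul (x u v y z w : H) :
    Phi k H ((x ⊗ₜ (u ⊗ₜ v)) ⊗ₜ (y ⊗ₜ (z ⊗ₜ w)))
      = antipode (R := k) (x * y) *
          ((u * z) * (antipode (R := k) w * antipode (R := k) v)) := by
  simp [Phi, mul'_apply]

/-- Contraction of the product representation: `∑ S((xy)₁)(xy)₂ = ε(x)ε(y) • 1`. -/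
lemma prod_repr_contract (x y : H) :
    ∑ n ∈ (ℛ k y).index, ∑ m ∈ (ℛ k x).index,
      antipode (R := k) ((ℛ k x).left m * (ℛ k y).left n) *
        ((ℛ k x).right m * (ℛ k y).right n)
      = (counit (R := k) x * counit (R := k) y) • (1 : H) := by
  let mr : Coalgebra.Repr k (x * y) ((H × H) × (H × H)) :=
    { index := (ℛ k y).index ×ˢ (ℛ k x).index
      left := fun p => (ℛ k x).left p.2 * (ℛ k y).left p.1
      right := fun p => (ℛ k x).right p.2 * (ℛ k y).right p.1
      eq := by
        rw [Finset.sum_product, Bialgebra.comul_mul]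
        conv_rhs => rw [← (ℛ k x).eq, ← (ℛ k y).eq, Finset.sum_mul_sum]
        rw [Finset.sum_comm]
        refine Finset.sum_congr rfl fun m _ => Finset.sum_congr rfl fun n _ => ?_
        rw [Algebra.TensorProduct.tmul_mul_tmul] }
  have h := sum_antipode_mul_eq_smul mr
  rw [Finset.sum_product] at h
  rw [h]
  rw [Bialgebra.counit_mul, mul_comm]

lemma antipode_mul' (a b : H) :
    antipode (R := k) (a * b) = antipode (R := k) b * antipode (R := k) a := by
  set r := ℛ k a with hr
  set s := ℛ k b with hs
  have hTa := Coalgebra.sum_tmul_tmul_eq (R := k) r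
    (fun i => ℛ k (r.left i)) (fun i => ℛ k (r.right i))
  have hTb := Coalgebra.sum_tmul_tmul_eq (R := k) s
    (fun j => ℛ k (s.left j)) (fun j => ℛ k (s.right j))
  have hX := congrArg₂ (fun t u => Phi k H (t ⊗ₜ[k] u)) hTa hTb
  simp only [sum_tmul, tmul_sum, map_sum, Phi_tmul] at hX
  have way1 :
      ∑ j ∈ s.index, ∑ n ∈ (ℛ k (s.right j)).index, ∑ i ∈ r.index,
        ∑ m ∈ (ℛ k (r.right i)).index,
          antipode (R := k) (r.left i * s.left j) *
            ((ℛ k (r.right i)).left m * (ℛ k (s.right j)).left n *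
              (antipode (R := k) ((ℛ k (s.right j)).right n) *
                antipode (R := k) ((ℛ k (r.right i)).right m)))
        = antipode (R := k) (a * b) := by
    calc ∑ j ∈ s.index, ∑ n ∈ (ℛ k (s.right j)).index, ∑ i ∈ r.index,
        ∑ m ∈ (ℛ k (r.right i)).index,
          antipode (R := k) (r.left i * s.left j) *
            ((ℛ k (r.right i)).left m * (ℛ k (s.right j)).left n *
              (antipode (R := k) ((ℛ k (s.right j)).right n) *
                antipode (R := k) ((ℛ k (r.right i)).right m)))
        = ∑ j ∈ s.index, ∑ i ∈ r.index, ∑ m ∈ (ℛ k (r.right i)).index,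
            ∑ n ∈ (ℛ k (s.right j)).index,
            antipode (R := k) (r.left i * s.left j) *
              ((ℛ k (r.right i)).left m *
                (((ℛ k (s.right j)).left n * antipode (R := k) ((ℛ k (s.right j)).right n)) *
                  antipode (R := k) ((ℛ k (r.right i)).right m))) := by
          refine Finset.sum_congr rfl fun j _ => ?_
          rw [Finset.sum_comm]
          refine Finset.sum_congr rfl fun i _ => ?_
          rw [Finset.sum_comm]
          refine Finset.sum_congr rfl fun m _ => Finset.sum_congr rfl fun n _ => ?_
          rw [mul_assoc ((ℛ k (r.right i)).left m), ← mul_assoc ((ℛ k (s.right j)).left n)]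
      _ = ∑ j ∈ s.index, counit (R := k) (s.right j) •
            antipode (R := k) (a * s.left j) := by
          refine Finset.sum_congr rfl fun j _ => ?_
          have e1 : ∀ i ∈ r.index, ∀ m ∈ (ℛ k (r.right i)).index,
              ∑ n ∈ (ℛ k (s.right j)).index,
                antipode (R := k) (r.left i * s.left j) *
                  ((ℛ k (r.right i)).left m *
                    (((ℛ k (s.right j)).left n * antipode (R := k) ((ℛ k (s.right j)).right n)) *
                      antipode (R := k) ((ℛ k (r.right i)).right m)))
              = counit (R := k) (s.right j) •
                  (antipode (R := k) (r.left i * s.left j) *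
                    ((ℛ k (r.right i)).left m *
                      antipode (R := k) ((ℛ k (r.right i)).right m))) := by
            intro i _ m _
            rw [← Finset.mul_sum, ← Finset.mul_sum, ← Finset.sum_mul,
              sum_mul_antipode_eq_smul (ℛ k (s.right j)), smul_mul_assoc, one_mul,
              mul_smul_comm, mul_smul_comm]
          calc ∑ i ∈ r.index, ∑ m ∈ (ℛ k (r.right i)).index,
              ∑ n ∈ (ℛ k (s.right j)).index,
                antipode (R := k) (r.left i * s.left j) *
                  ((ℛ k (r.right i)).left m *
                    (((ℛ k (s.right j)).left n * antipode (R := k) ((ℛ k (s.right j)).right n)) *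
                      antipode (R := k) ((ℛ k (r.right i)).right m)))
              = ∑ i ∈ r.index, counit (R := k) (s.right j) •
                  (counit (R := k) (r.right i) •
                    antipode (R := k) (r.left i * s.left j)) := by
                refine Finset.sum_congr rfl fun i hi => ?_
                rw [Finset.sum_congr rfl (e1 i hi), ← Finset.smul_sum, ← Finset.mul_sum,
                  sum_mul_antipode_eq_smul (ℛ k (r.right i)), mul_smul_comm, mul_one]
            _ = counit (R := k) (s.right j) • antipode (R := k) (a * s.left j) := by
                rw [← Finset.smul_sum]
                congr 1
                have : ∀ i ∈ r.index, counit (R := k) (r.right i) •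
                    antipode (R := k) (r.left i * s.left j)
                    = antipode (R := k) ((counit (R := k) (r.right i) • r.left i) * s.left j) := by
                  intro i _
                  rw [smul_mul_assoc, map_smul]
                rw [Finset.sum_congr rfl this, ← map_sum, ← Finset.sum_mul, repr_sum_smul_left r]
      _ = antipode (R := k) (a * b) := by
          have : ∀ j ∈ s.index, counit (R := k) (s.right j) •
              antipode (R := k) (a * s.left j)
              = antipode (R := k) (a * (counit (R := k) (s.right j) • s.left j)) := by
            intro j _
            rw [mul_smul_comm, map_smul]
          rw [Finset.sum_congr rfl this, ← map_sum, ← Finset.mul_sum, repr_sum_smul_left s]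
  have way2 :
      ∑ j ∈ s.index, ∑ n ∈ (ℛ k (s.left j)).index, ∑ i ∈ r.index,
        ∑ m ∈ (ℛ k (r.left i)).index,
          antipode (R := k) ((ℛ k (r.left i)).left m * (ℛ k (s.left j)).left n) *
            ((ℛ k (r.left i)).right m * (ℛ k (s.left j)).right n *
              (antipode (R := k) (s.right j) * antipode (R := k) (r.right i)))
        = antipode (R := k) b * antipode (R := k) a := by
    calc ∑ j ∈ s.index, ∑ n ∈ (ℛ k (s.left j)).index, ∑ i ∈ r.index,
        ∑ m ∈ (ℛ k (r.left i)).index,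
          antipode (R := k) ((ℛ k (r.left i)).left m * (ℛ k (s.left j)).left n) *
            ((ℛ k (r.left i)).right m * (ℛ k (s.left j)).right n *
              (antipode (R := k) (s.right j) * antipode (R := k) (r.right i)))
        = ∑ j ∈ s.index, ∑ i ∈ r.index,
            (∑ n ∈ (ℛ k (s.left j)).index, ∑ m ∈ (ℛ k (r.left i)).index,
              antipode (R := k) ((ℛ k (r.left i)).left m * (ℛ k (s.left j)).left n) *
                ((ℛ k (r.left i)).right m * (ℛ k (s.left j)).right n)) *
              (antipode (R := k) (s.right j) * antipode (R := k) (r.right i)) := by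
          refine Finset.sum_congr rfl fun j _ => ?_
          rw [Finset.sum_comm]
          refine Finset.sum_congr rfl fun i _ => ?_
          rw [Finset.sum_mul]
          refine Finset.sum_congr rfl fun n _ => ?_
          rw [Finset.sum_mul]
          refine Finset.sum_congr rfl fun m _ => ?_
          exact (mul_assoc _ _ _).symm
      _ = ∑ j ∈ s.index, ∑ i ∈ r.index,
            counit (R := k) (r.left i) • counit (R := k) (s.left j) •
              (antipode (R := k) (s.right j) * antipode (R := k) (r.right i)) := by
          refine Finset.sum_congr rfl fun j _ => Finset.sum_congr rfl fun i _ => ?_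
          rw [prod_repr_contract (r.left i) (s.left j), smul_mul_assoc, one_mul, mul_smul]
      _ = antipode (R := k) b * antipode (R := k) a := by
          have : ∀ j ∈ s.index, ∑ i ∈ r.index,
              counit (R := k) (r.left i) • counit (R := k) (s.left j) •
                (antipode (R := k) (s.right j) * antipode (R := k) (r.right i))
              = counit (R := k) (s.left j) •
                  (antipode (R := k) (s.right j) * antipode (R := k) a) := by
            intro j _
            have e : ∀ i ∈ r.index,
                counit (R := k) (r.left i) • counit (R := k) (s.left j) •
                  (antipode (R := k) (s.right j) * antipode (R := k) (r.right i))
                = counit (R := k) (s.left j) •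
                    (antipode (R := k) (s.right j) *
                      antipode (R := k) (counit (R := k) (r.left i) • r.right i)) := by
              intro i _
              rw [map_smul, mul_smul_comm, smul_comm]
            rw [Finset.sum_congr rfl e, ← Finset.smul_sum, ← Finset.mul_sum, ← map_sum,
              repr_sum_smul_right r]
          rw [Finset.sum_congr rfl this]
          have e2 : ∀ j ∈ s.index, counit (R := k) (s.left j) •
              (antipode (R := k) (s.right j) * antipode (R := k) a)
              = antipode (R := k) (counit (R := k) (s.left j) • s.right j) *
                  antipode (R := k) a := by
            intro j _
            rw [map_smul, smul_mul_assoc]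
          rw [Finset.sum_congr rfl e2, ← Finset.sum_mul, ← map_sum, repr_sum_smul_right s]
  rw [way1, way2] at hX
  exact hX.symm

end HopfAux


/-- `A` is a right coideal subalgebra of `H`: `Δ(A) ⊆ A ⊗ H`. -/
def IsRightCoidealSubalgebra (k H : Type*) [CommRing k] [Ring H] [HopfAlgebra k H]
    (A : Subalgebra k H) : Prop :=
  ∀ a ∈ A, Coalgebra.comul a ∈
    LinearMap.range (TensorProduct.mapIncl (Subalgebra.toSubmodule A) (⊤ : Submodule k H))

/-- `B` is a left coideal subalgebra of `H`: `Δ(B) ⊆ H ⊗ B`. -/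
def IsLeftCoidealSubalgebra (k H : Type*) [CommRing k] [Ring H] [HopfAlgebra k H]
    (B : Subalgebra k H) : Prop :=
  ∀ b ∈ B, Coalgebra.comul b ∈
    LinearMap.range (TensorProduct.mapIncl (⊤ : Submodule k H) (Subalgebra.toSubmodule B))

/-- The right ideal of `H` generated by a subset `T`, as a `k`-submodule:
the span of all products `t * h` with `t ∈ T`, `h ∈ H`. -/
def rightIdealSpan (k H : Type*) [CommRing k] [Ring H] [Algebra k H] (T : Set H) :
    Submodule k H :=
  Submodule.span k {z : H | ∃ t ∈ T, ∃ h : H, z = t * h}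

/-- The augmentation part `X⁺ = X ∩ ker ε` of a subset `X` of `H`. -/
def augPart (k H : Type*) [CommRing k] [Ring H] [HopfAlgebra k H] (X : Set H) : Set H :=
  {x ∈ X | Coalgebra.counit (R := k) x = 0}


namespace HopfAux

section Main

universe u v

variable {k : Type u} {H : Type v} [Field k] [Ring H] [HopfAlgebra k H] {A : Subalgebra k H}

/-- Extract a finite representation of `comul a` with left legs in `A`. -/
lemma exists_repr (hA : IsRightCoidealSubalgebra k H A) {a : H} (ha : a ∈ A) :
    ∃ d : Coalgebra.Repr k a (↥(Subalgebra.toSubmodule A) × ↥(⊤ : Submodule k H)), ∀ i ∈ d.index, d.left i ∈ A := by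
  obtain ⟨t, ht⟩ := hA a ha
  obtain ⟨T, hT⟩ := TensorProduct.exists_finset (R := k) t
  refine ⟨{ index := T, left := fun p => (p.1 : H), right := fun p => (p.2 : H),
            eq := ?_ }, fun i _ => i.1.2⟩
  rw [← ht, hT, map_sum]
  simp [TensorProduct.mapIncl]

lemma mem_span_aux1 (hA : IsRightCoidealSubalgebra k H A) {a : H} (ha : a ∈ A)
    (h0 : counit (R := k) a = 0) (h : H) :
    a * h ∈ rightIdealSpan k H (augPart k H ((antipode (R := k)) '' (A : Set H))) := by
  obtain ⟨d, hd⟩ := exists_repr hA ha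
  have h1 : ∑ i ∈ d.index, antipode (R := k) (d.left i) * d.right i = 0 := by
    rw [sum_antipode_mul_eq_smul d, h0, zero_smul]
  have h2 : ∑ i ∈ d.index, counit (R := k) (d.left i) • d.right i = a := repr_sum_smul_right d
  have key : ∑ i ∈ d.index,
      antipode (R := k) (d.left i - counit (R := k) (d.left i) • 1) * (d.right i * h)
      = -(a * h) := by
    have e : ∀ i ∈ d.index,
        antipode (R := k) (d.left i - counit (R := k) (d.left i) • 1) * (d.right i * h)
        = antipode (R := k) (d.left i) * d.right i * h
            - counit (R := k) (d.left i) • d.right i * h := by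
      intro i _
      rw [map_sub, map_smul, antipode_one', sub_mul, smul_mul_assoc, one_mul,
        mul_assoc, smul_mul_assoc]
    rw [Finset.sum_congr rfl e, Finset.sum_sub_distrib, ← Finset.sum_mul, ← Finset.sum_mul,
      h1, h2, zero_mul, zero_sub]
  have key2 : a * h = -∑ i ∈ d.index,
      antipode (R := k) (d.left i - counit (R := k) (d.left i) • 1) * (d.right i * h) := by
    rw [key, neg_neg]
  rw [key2]
  refine Submodule.neg_mem _ (Submodule.sum_mem _ fun i hi => Submodule.subset_span ?_)
  refine ⟨antipode (R := k) (d.left i - counit (R := k) (d.left i) • 1), ⟨?_, ?_⟩,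
    d.right i * h, rfl⟩
  · exact ⟨d.left i - counit (R := k) (d.left i) • 1,
      sub_mem (hd i hi) (SMulMemClass.smul_mem _ (one_mem A)), rfl⟩
  · rw [counit_antipode', map_sub, map_smul, Bialgebra.counit_one, smul_eq_mul,
      mul_one, sub_self]

lemma mem_span_aux2 (hA : IsRightCoidealSubalgebra k H A) {a : H} (ha : a ∈ A)
    (h0 : counit (R := k) (antipode (R := k) a) = 0) (h : H) :
    antipode (R := k) a * h ∈ rightIdealSpan k H (augPart k H (A : Set H)) := by
  have h0' : counit (R := k) a = 0 := by rw [← counit_antipode' a, h0]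
  obtain ⟨d, hd⟩ := exists_repr hA ha
  have h1 : ∑ i ∈ d.index, d.left i * antipode (R := k) (d.right i) = 0 := by
    rw [sum_mul_antipode_eq_smul d, h0', zero_smul]
  have h2 : ∑ i ∈ d.index, counit (R := k) (d.left i) • antipode (R := k) (d.right i)
      = antipode (R := k) a := by
    conv_rhs => rw [← repr_sum_smul_right d]
    rw [map_sum]
    exact Finset.sum_congr rfl fun i _ => (map_smul _ _ _).symm
  have key : ∑ i ∈ d.index,
      (d.left i - counit (R := k) (d.left i) • 1) * (antipode (R := k) (d.right i) * h)
      = -(antipode (R := k) a * h) := by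
    have e : ∀ i ∈ d.index,
        (d.left i - counit (R := k) (d.left i) • 1) * (antipode (R := k) (d.right i) * h)
        = d.left i * antipode (R := k) (d.right i) * h
            - counit (R := k) (d.left i) • antipode (R := k) (d.right i) * h := by
      intro i _
      rw [sub_mul, smul_mul_assoc, one_mul, mul_assoc, smul_mul_assoc]
    rw [Finset.sum_congr rfl e, Finset.sum_sub_distrib, ← Finset.sum_mul, ← Finset.sum_mul,
      h1, h2, zero_mul, zero_sub]
  have key2 : antipode (R := k) a * h = -∑ i ∈ d.index,
      (d.left i - counit (R := k) (d.left i) • 1) * (antipode (R := k) (d.right i) * h) := by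
    rw [key, neg_neg]
  rw [key2]
  refine Submodule.neg_mem _ (Submodule.sum_mem _ fun i hi => Submodule.subset_span ?_)
  refine ⟨d.left i - counit (R := k) (d.left i) • 1, ⟨?_, ?_⟩,
    antipode (R := k) (d.right i) * h, rfl⟩
  · exact sub_mem (hd i hi) (SMulMemClass.smul_mem _ (one_mem A))
  · rw [map_sub, map_smul, Bialgebra.counit_one, smul_eq_mul, mul_one, sub_self]

variable (A) in
/-- The image of `A` under the antipode, as a subalgebra. -/
noncomputable def antipodeImage : Subalgebra k H where
  carrier := antipode (R := k) '' (A : Set H)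
  mul_mem' := by
    rintro x y ⟨a, ha, rfl⟩ ⟨b, hb, rfl⟩
    exact ⟨b * a, mul_mem hb ha, antipode_mul' b a⟩
  one_mem' := ⟨1, one_mem A, antipode_one'⟩
  add_mem' := by
    rintro x y ⟨a, ha, rfl⟩ ⟨b, hb, rfl⟩
    exact ⟨a + b, add_mem ha hb, map_add _ _ _⟩
  zero_mem' := ⟨0, zero_mem A, map_zero _⟩
  algebraMap_mem' := by
    intro c
    refine ⟨algebraMap k H c, algebraMap_mem A c, ?_⟩
    rw [Algebra.algebraMap_eq_smul_one, map_smul, antipode_one']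

lemma coe_antipodeImage : (antipodeImage A : Set H) = antipode (R := k) '' (A : Set H) := rfl

lemma antipodeImage_isLeftCoideal (hA : IsRightCoidealSubalgebra k H A) :
    IsLeftCoidealSubalgebra k H (antipodeImage A) := by
  rintro b ⟨a, haA, rfl⟩
  obtain ⟨t, ht⟩ := hA a haA
  obtain ⟨T, hT⟩ := TensorProduct.exists_finset (R := k) t
  have hcomul : (Coalgebra.comul a : H ⊗[k] H) = ∑ p ∈ T, ((p.1 : H) ⊗ₜ[k] (p.2 : H)) := by
    rw [← ht, hT, map_sum]
    simp [TensorProduct.mapIncl]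
  refine ⟨∑ p ∈ T,
    (⟨antipode (R := k) (p.2 : H), trivial⟩ : (⊤ : Submodule k H)) ⊗ₜ[k]
      (⟨antipode (R := k) (p.1 : H), ⟨(p.1 : H), p.1.2, rfl⟩⟩ :
        Subalgebra.toSubmodule (antipodeImage A)), ?_⟩
  rw [map_sum, comul_antipode_apply, Gmap, LinearMap.comp_apply, LinearMap.comp_apply, hcomul]
  rw [map_sum, map_sum]
  simp [TensorProduct.mapIncl]

end Main

end HopfAux

/-- If `A` is a right coideal subalgebra of a Hopf algebra `H` over a field
`k` with antipode `S`, then `S(A)` is a left coideal subalgebra of `H` and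
`A⁺H = S(A)⁺H`. -/
theorem antipode_image_isLeftCoidealSubalgebra_and_rightIdeal_eq
    (k H : Type*) [Field k] [Ring H] [HopfAlgebra k H]
    (A : Subalgebra k H) (hA : IsRightCoidealSubalgebra k H A) :
    (∃ B : Subalgebra k H, (B : Set H) = antipode (R := k) '' (A : Set H) ∧
        IsLeftCoidealSubalgebra k H B) ∧
      rightIdealSpan k H (augPart k H (A : Set H)) =
        rightIdealSpan k H (augPart k H (antipode (R := k) '' (A : Set H))) := by
  classical
  constructor
  · exact ⟨HopfAux.antipodeImage A, HopfAux.coe_antipodeImage,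
      HopfAux.antipodeImage_isLeftCoideal hA⟩
  · -- the two augmentation right ideals coincide
    apply le_antisymm
    · refine Submodule.span_le.2 ?_
      rintro z ⟨t, ⟨ht1, ht2⟩, h, rfl⟩
      exact HopfAux.mem_span_aux1 hA ht1 ht2 h
    · refine Submodule.span_le.2 ?_
      rintro z ⟨t, ⟨ht1, ht2⟩, h, rfl⟩
      obtain ⟨a, haA, rfl⟩ := ht1
      exact HopfAux.mem_span_aux2 hA haA ht2 h
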